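/- arXiv:2604.02562 — 3 statements merged into one kernel-verified Lean document; each statement's English description precedes it below -/
import Mathlib

section
/- Let m ≥ 3 and let λ_1,…,λ_m ∈ ℤ² be such that each λ_i is primitive and det(λ_i,λ_{i+1}) ≠ 0 for i = 1,…,m (indices mod m). Then L_1 ∩ ⋯ ∩ L_m = ℤ⟨a⟩ + ℤ⟨b⟩ + φ(K) as submodules of ℤ^m, and this sum is an internal direct sum: every element of L_1 ∩ ⋯ ∩ L_m is uniquely of the form α·a + β·b + φ(t) with α, β ∈ ℤ and t ∈ K. -/
namespace ToricStmt

/-- Cyclic successor on `Fin m` (indices mod `m`). -/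
def fsucc {m : ℕ} (i : Fin m) : Fin m := ⟨(i.val + 1) % m, Nat.mod_lt _ i.pos⟩

/-- The submodule `K` of linear relations among the `λ_i = (a_i, b_i)`. -/
def Kmod (m : ℕ) (a b : Fin m → ℤ) : Submodule ℤ (Fin m → ℤ) where
  carrier := {t | ∑ i, t i * a i = 0 ∧ ∑ i, t i * b i = 0}
  add_mem' := by
    intro x y hx hy
    obtain ⟨hx1, hx2⟩ := hx
    obtain ⟨hy1, hy2⟩ := hy
    constructor
    · simp only [Pi.add_apply, add_mul]
      rw [Finset.sum_add_distrib, hx1, hy1, add_zero]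
    · simp only [Pi.add_apply, add_mul]
      rw [Finset.sum_add_distrib, hx2, hy2, add_zero]
  zero_mem' := by constructor <;> simp
  smul_mem' := by
    intro c x hx
    obtain ⟨hx1, hx2⟩ := hx
    constructor
    · simp only [Pi.smul_apply, smul_eq_mul, mul_assoc]
      rw [← Finset.mul_sum, hx1, mul_zero]
    · simp only [Pi.smul_apply, smul_eq_mul, mul_assoc]
      rw [← Finset.mul_sum, hx2, mul_zero]

/-- The linear map `φ : ℤ^m → ℤ^m`, with `(φ t)_i = ∑_{j<i} (a_j b_i - a_i b_j) t_j`. -/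
def phi (m : ℕ) (a b : Fin m → ℤ) : (Fin m → ℤ) →ₗ[ℤ] (Fin m → ℤ) where
  toFun t := fun i => ∑ j ∈ Finset.univ.filter (fun j => j < i), (a j * b i - a i * b j) * t j
  map_add' x y := by
    funext i
    simp only [Pi.add_apply, mul_add]
    exact Finset.sum_add_distrib
  map_smul' c x := by
    funext i
    simp only [Pi.smul_apply, smul_eq_mul, RingHom.id_apply]
    rw [Finset.mul_sum]
    exact Finset.sum_congr rfl fun j _ => by ring

/-- The lattice `L_i`: the span of the `e_j` for `j ∉ {i, i+1}` together with
`a_i e_i + a_{i+1} e_{i+1}` and `b_i e_i + b_{i+1} e_{i+1}` (indices mod `m`). -/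
def Lmod (m : ℕ) (a b : Fin m → ℤ) (i : Fin m) : Submodule ℤ (Fin m → ℤ) :=
  Submodule.span ℤ
    ((fun j : Fin m => (Pi.single j 1 : Fin m → ℤ)) '' {j : Fin m | j ≠ i ∧ j ≠ fsucc i} ∪
      {a i • (Pi.single i 1 : Fin m → ℤ) + a (fsucc i) • (Pi.single (fsucc i) 1 : Fin m → ℤ),
       b i • (Pi.single i 1 : Fin m → ℤ) + b (fsucc i) • (Pi.single (fsucc i) 1 : Fin m → ℤ)})




/-- helper finset -/
def F (m n : ℕ) : Finset (Fin m) := Finset.univ.filter (fun j => j.val < n)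

lemma F_zero (m : ℕ) : F m 0 = ∅ := by
  simp [F]

lemma F_succ {m n : ℕ} (h : n < m) : F m (n + 1) = insert ⟨n, h⟩ (F m n) := by
  ext j
  simp only [F, Finset.mem_filter, Finset.mem_univ, true_and, Finset.mem_insert, Fin.ext_iff]
  omega

lemma F_univ {m n : ℕ} (h : m ≤ n) : F m n = Finset.univ := by
  ext j
  simp only [F, Finset.mem_filter, Finset.mem_univ, true_and, iff_true]
  omega

lemma filter_lt_eq {m : ℕ} (i : Fin m) :
    Finset.univ.filter (fun j => j < i) = F m i.val := rfl

lemma fsucc_val {m : ℕ} {i : Fin m} (h : i.val + 1 < m) : (fsucc i).val = i.val + 1 :=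
  Nat.mod_eq_of_lt h

lemma fsucc_last {m : ℕ} (h : 0 < m) : (fsucc ⟨m - 1, by omega⟩ : Fin m) = ⟨0, h⟩ := by
  simp only [fsucc, Fin.ext_iff]
  simp only [Nat.sub_add_cancel h, Nat.mod_self]

lemma fsucc_ne {m : ℕ} (hm : 2 ≤ m) (i : Fin m) : fsucc i ≠ i := by
  simp only [fsucc, Ne, Fin.ext_iff]
  have := i.isLt
  rcases Nat.lt_or_ge (i.val + 1) m with h | h
  · rw [Nat.mod_eq_of_lt h]; omega
  · have : i.val = m - 1 := by omega
    rw [this, Nat.sub_add_cancel (by omega), Nat.mod_self]; omega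

lemma exists_rep {a b α β : ℤ} (h : Int.gcd a b = 1) (hab : α * a + β * b = 0) :
    ∃ t : ℤ, t * a = β ∧ t * b = -α := by
  obtain ⟨u, v, huv⟩ := Int.isCoprime_iff_gcd_eq_one.mpr h
  refine ⟨β * u - α * v, ?_, ?_⟩
  · linear_combination β * huv - v * hab
  · linear_combination u * hab - α * huv

lemma zero_of_coprime {a b c : ℤ} (h : Int.gcd a b = 1) (h1 : c * a = 0) (h2 : c * b = 0) :
    c = 0 := by
  obtain ⟨u, v, huv⟩ := Int.isCoprime_iff_gcd_eq_one.mpr h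
  linear_combination u * h1 + v * h2 - c * huv


lemma sum_F_zero {m : ℕ} (f : Fin m → ℤ) : ∑ j ∈ F m 0, f j = 0 := by simp [F_zero]

lemma sum_F_succ {m n : ℕ} (h : n < m) (f : Fin m → ℤ) :
    ∑ j ∈ F m (n + 1), f j = (∑ j ∈ F m n, f j) + f ⟨n, h⟩ := by
  rw [F_succ h, Finset.sum_insert (by simp [F])]
  ring

lemma sum_F_univ {m n : ℕ} (h : m ≤ n) (f : Fin m → ℤ) :
    ∑ j ∈ F m n, f j = ∑ j, f j := by rw [F_univ h]

attribute [irreducible] F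


lemma phi_apply (m : ℕ) (a b : Fin m → ℤ) (t : Fin m → ℤ) (i : Fin m) :
    phi m a b t i =
      (∑ j ∈ F m i.val, t j * a j) * b i - a i * (∑ j ∈ F m i.val, t j * b j) := by
  show (∑ j ∈ Finset.univ.filter (fun j => j < i), (a j * b i - a i * b j) * t j) = _
  rw [filter_lt_eq, Finset.sum_mul, Finset.mul_sum, ← Finset.sum_sub_distrib]
  exact Finset.sum_congr rfl fun j _ => by ring

/-- The "coordinates" characterization of `Lmod`. -/
def Pmod (m : ℕ) (a b : Fin m → ℤ) (i : Fin m) : Submodule ℤ (Fin m → ℤ) where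
  carrier := {x | ∃ α β : ℤ,
    x i = α * a i + β * b i ∧ x (fsucc i) = α * a (fsucc i) + β * b (fsucc i)}
  add_mem' := by
    rintro x y ⟨α, β, h1, h2⟩ ⟨α', β', h1', h2'⟩
    exact ⟨α + α', β + β', by simp [h1, h1']; ring, by simp [h2, h2']; ring⟩
  zero_mem' := ⟨0, 0, by simp, by simp⟩
  smul_mem' := by
    rintro c x ⟨α, β, h1, h2⟩
    exact ⟨c * α, c * β, by simp [h1]; ring, by simp [h2]; ring⟩

lemma mem_span_singles {m : ℕ} {s : Set (Fin m)} {z : Fin m → ℤ}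
    (hz : ∀ j, j ∉ s → z j = 0) :
    z ∈ Submodule.span ℤ ((fun j : Fin m => (Pi.single j 1 : Fin m → ℤ)) '' s) := by
  have hz' : z = ∑ j, z j • (Pi.single j (1:ℤ) : Fin m → ℤ) := by
    funext k
    simp [Finset.sum_apply, Pi.single_apply]
  rw [hz']
  refine Submodule.sum_mem _ fun j _ => ?_
  by_cases hj : j ∈ s
  · exact Submodule.smul_mem _ _ (Submodule.subset_span ⟨j, hj, rfl⟩)
  · rw [hz j hj]; simp

lemma Lmod_eq_Pmod {m : ℕ} (hm : 2 ≤ m) (a b : Fin m → ℤ) (i : Fin m) :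
    Lmod m a b i = Pmod m a b i := by
  have hne : fsucc i ≠ i := fsucc_ne hm i
  apply le_antisymm
  · rw [Lmod, Submodule.span_le]
    rintro x (⟨j, ⟨hj1, hj2⟩, rfl⟩ | hx)
    · exact ⟨0, 0, by simp [Pi.single_apply, hj1, hj2], by simp [Pi.single_apply, hj1, hj2]⟩
    · rcases hx with rfl | rfl
      · exact ⟨1, 0, by simp [Pi.single_apply, hne], by simp [Pi.single_apply, hne]⟩
      · exact ⟨0, 1, by simp [Pi.single_apply, hne], by simp [Pi.single_apply, hne]⟩
  · rintro x ⟨α, β, h1, h2⟩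
    set v1 : Fin m → ℤ :=
      a i • (Pi.single i 1 : Fin m → ℤ) + a (fsucc i) • (Pi.single (fsucc i) 1 : Fin m → ℤ)
    set v2 : Fin m → ℤ :=
      b i • (Pi.single i 1 : Fin m → ℤ) + b (fsucc i) • (Pi.single (fsucc i) 1 : Fin m → ℤ)
    have hv1 : v1 ∈ Lmod m a b i := Submodule.subset_span (Or.inr (Or.inl rfl))
    have hv2 : v2 ∈ Lmod m a b i := Submodule.subset_span (Or.inr (Or.inr rfl))
    have hrest : x - α • v1 - β • v2 ∈ Lmod m a b i := by
      have : x - α • v1 - β • v2 ∈ Submodule.span ℤ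
          ((fun j : Fin m => (Pi.single j 1 : Fin m → ℤ)) '' {j : Fin m | j ≠ i ∧ j ≠ fsucc i}) := by
        apply mem_span_singles
        intro j hj
        simp only [Set.mem_setOf_eq, not_and_or, not_not] at hj
        rcases hj with rfl | rfl
        · simp [v1, v2, Pi.single_apply, hne, h1]
        · simp [v1, v2, Pi.single_apply, hne, h2]
      exact Submodule.span_mono Set.subset_union_left this
    have := Submodule.add_mem _ (Submodule.add_mem _ hrest
      (Submodule.smul_mem _ α hv1)) (Submodule.smul_mem _ β hv2)
    have hxx : x = x - α • v1 - β • v2 + α • v1 + β • v2 := by abel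
    rw [hxx]; exact this


lemma key_aux (m : ℕ) (hm : 3 ≤ m) (a b t : Fin m → ℤ) (c A B : ℤ)
    (hcoord : ∀ n (hn : n < m),
      A * a ⟨n, hn⟩ + B * b ⟨n, hn⟩ +
        ((∑ j ∈ F m n, t j * a j) * b ⟨n, hn⟩ - a ⟨n, hn⟩ * (∑ j ∈ F m n, t j * b j)) = 0)
    (hdet' : ∀ n (hn : n + 1 < m),
      a ⟨n, by omega⟩ * b ⟨n + 1, hn⟩ - a ⟨n + 1, hn⟩ * b ⟨n, by omega⟩ ≠ 0)
    (estep_a : ∀ n (hn : n < m), (∑ j ∈ F m (n + 1), t j * a j)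
      = (∑ j ∈ F m n, t j * a j) + t ⟨n, hn⟩ * a ⟨n, hn⟩)
    (estep_b : ∀ n (hn : n < m), (∑ j ∈ F m (n + 1), t j * b j)
      = (∑ j ∈ F m n, t j * b j) + t ⟨n, hn⟩ * b ⟨n, hn⟩)
    (e0a : (∑ j ∈ F m 0, t j * a j) = 0) (e0b : (∑ j ∈ F m 0, t j * b j) = 0)
    (hc1 : c * a ⟨0, by omega⟩ = B) (hc2 : c * b ⟨0, by omega⟩ = -A) :
      ∀ n, 1 ≤ n → n < m →
      (∑ j ∈ F m n, t j * a j) = -c * a ⟨0, by omega⟩ ∧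
      (∑ j ∈ F m n, t j * b j) = -c * b ⟨0, by omega⟩ := by
    intro n
    induction n with
    | zero => omega
    | succ k ih =>
      intro _ hk1
      have hkm : k < m := by omega
      have eka := estep_a k hkm
      have ekb := estep_b k hkm
      have hk := hcoord (k + 1) hk1
      rcases Nat.eq_zero_or_pos k with rfl | hkpos
      · have hd := hdet' 0 (by omega)
        have ht0 : t ⟨0, hkm⟩ = -c := by
          have hz : (t ⟨0, hkm⟩ + c) *
              (a ⟨0, by omega⟩ * b ⟨1, by omega⟩ - a ⟨1, by omega⟩ * b ⟨0, by omega⟩) = 0 := by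
            linear_combination hk - b ⟨1, by omega⟩ * eka + a ⟨1, by omega⟩ * ekb
              - b ⟨1, by omega⟩ * e0a + a ⟨1, by omega⟩ * e0b
              + b ⟨1, by omega⟩ * hc1 - a ⟨1, by omega⟩ * hc2
          rcases mul_eq_zero.mp hz with h | h
          · linarith
          · exact absurd h hd
        constructor
        · linear_combination eka + e0a + a ⟨0, by omega⟩ * ht0
        · linear_combination ekb + e0b + b ⟨0, by omega⟩ * ht0
      · obtain ⟨iha, ihb⟩ := ih hkpos hkm
        have hd := hdet' k hk1
        have htk : t ⟨k, hkm⟩ = 0 := by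
          have hz : t ⟨k, hkm⟩ *
              (a ⟨k, hkm⟩ * b ⟨k + 1, hk1⟩ - a ⟨k + 1, hk1⟩ * b ⟨k, hkm⟩) = 0 := by
            linear_combination hk - b ⟨k + 1, hk1⟩ * eka + a ⟨k + 1, hk1⟩ * ekb
              - b ⟨k + 1, hk1⟩ * iha + a ⟨k + 1, hk1⟩ * ihb
              + b ⟨k + 1, hk1⟩ * hc1 - a ⟨k + 1, hk1⟩ * hc2
          rcases mul_eq_zero.mp hz with h | h
          · exact h
          · exact absurd h hd
        constructor
        · linear_combination eka + iha + a ⟨k, hkm⟩ * htk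
        · linear_combination ekb + ihb + b ⟨k, hkm⟩ * htk

lemma indep {m : ℕ} (hm : 3 ≤ m) (a b : Fin m → ℤ)
    (hprim : ∀ i, Int.gcd (a i) (b i) = 1)
    (hdet : ∀ i : Fin m, a i * b (fsucc i) - a (fsucc i) * b i ≠ 0)
    (A B : ℤ) (t : Fin m → ℤ) (htK : t ∈ Kmod m a b)
    (h : A • a + B • b + phi m a b t = 0) :
    A = 0 ∧ B = 0 ∧ t = 0 := by
  have hcoord : ∀ n (hn : n < m),
      A * a ⟨n, hn⟩ + B * b ⟨n, hn⟩ +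
        ((∑ j ∈ F m n, t j * a j) * b ⟨n, hn⟩ - a ⟨n, hn⟩ * (∑ j ∈ F m n, t j * b j)) = 0 := by
    intro n hn
    have h2 := congrFun h ⟨n, hn⟩
    simp only [Pi.add_apply, Pi.smul_apply, smul_eq_mul, Pi.zero_apply] at h2
    rw [phi_apply] at h2
    exact h2
  have hdet' : ∀ n (hn : n + 1 < m),
      a ⟨n, by omega⟩ * b ⟨n + 1, hn⟩ - a ⟨n + 1, hn⟩ * b ⟨n, by omega⟩ ≠ 0 := by
    intro n hn
    have hs : fsucc (⟨n, by omega⟩ : Fin m) = ⟨n + 1, hn⟩ := Fin.ext (fsucc_val hn)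
    have hd := hdet ⟨n, by omega⟩
    rwa [hs] at hd
  have estep_a : ∀ n (hn : n < m), (∑ j ∈ F m (n + 1), t j * a j)
      = (∑ j ∈ F m n, t j * a j) + t ⟨n, hn⟩ * a ⟨n, hn⟩ := fun n hn => sum_F_succ hn _
  have estep_b : ∀ n (hn : n < m), (∑ j ∈ F m (n + 1), t j * b j)
      = (∑ j ∈ F m n, t j * b j) + t ⟨n, hn⟩ * b ⟨n, hn⟩ := fun n hn => sum_F_succ hn _
  have e0a : (∑ j ∈ F m 0, t j * a j) = 0 := sum_F_zero _
  have e0b : (∑ j ∈ F m 0, t j * b j) = 0 := sum_F_zero _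
  have h0 := hcoord 0 (by omega)
  have h0' : A * a ⟨0, by omega⟩ + B * b ⟨0, by omega⟩ = 0 := by
    linear_combination h0 - b ⟨0, by omega⟩ * e0a + a ⟨0, by omega⟩ * e0b
  obtain ⟨c, hc1, hc2⟩ := exists_rep (hprim ⟨0, by omega⟩) h0'
  have key := key_aux m hm a b t c A B hcoord hdet' estep_a estep_b e0a e0b hc1 hc2
  obtain ⟨hKa, hKb⟩ := htK
  have hlast : m - 1 < m := by omega
  obtain ⟨ka, kb⟩ := key (m - 1) (by omega) hlast
  have hta : (∑ j ∈ F m m, t j * a j) = 0 := by rw [sum_F_univ le_rfl]; exact hKa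
  have htb : (∑ j ∈ F m m, t j * b j) = 0 := by rw [sum_F_univ le_rfl]; exact hKb
  have hmm : m - 1 + 1 = m := by omega
  have esa := estep_a (m - 1) hlast
  have esb := estep_b (m - 1) hlast
  rw [hmm] at esa esb
  have hsa : t ⟨m - 1, hlast⟩ * a ⟨m - 1, hlast⟩ = c * a ⟨0, by omega⟩ := by
    linear_combination -esa + hta - ka
  have hsb : t ⟨m - 1, hlast⟩ * b ⟨m - 1, hlast⟩ = c * b ⟨0, by omega⟩ := by
    linear_combination -esb + htb - kb
  have hdl := hdet ⟨m - 1, hlast⟩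
  rw [fsucc_last (by omega)] at hdl
  have htl : t ⟨m - 1, hlast⟩ = 0 := by
    have hz : t ⟨m - 1, hlast⟩ *
        (a ⟨m - 1, hlast⟩ * b ⟨0, by omega⟩ - a ⟨0, by omega⟩ * b ⟨m - 1, hlast⟩) = 0 := by
      linear_combination b ⟨0, by omega⟩ * hsa - a ⟨0, by omega⟩ * hsb
    rcases mul_eq_zero.mp hz with h | h
    · exact h
    · exact absurd h hdl
  have hc0 : c = 0 := by
    apply zero_of_coprime (hprim ⟨0, by omega⟩)
    · linear_combination -hsa + a ⟨m - 1, hlast⟩ * htl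
    · linear_combination -hsb + b ⟨m - 1, hlast⟩ * htl
  have hA : A = 0 := by linear_combination hc2 - b ⟨0, by omega⟩ * hc0
  have hB : B = 0 := by linear_combination -hc1 + a ⟨0, by omega⟩ * hc0
  refine ⟨hA, hB, ?_⟩
  have hS : ∀ n, n ≤ m →
      (∑ j ∈ F m n, t j * a j) = 0 ∧ (∑ j ∈ F m n, t j * b j) = 0 := by
    intro n hn
    rcases Nat.eq_zero_or_pos n with rfl | hpos
    · exact ⟨e0a, e0b⟩
    rcases Nat.eq_or_lt_of_le hn with rfl | hlt
    · exact ⟨hta, htb⟩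
    obtain ⟨x1, x2⟩ := key n hpos hlt
    exact ⟨by linear_combination x1 - a ⟨0, by omega⟩ * hc0,
           by linear_combination x2 - b ⟨0, by omega⟩ * hc0⟩
  funext i
  have hi := i.isLt
  have h1 := hS i.val (by omega)
  have h2 := hS (i.val + 1) (by omega)
  have ea := estep_a i.val hi
  have eb := estep_b i.val hi
  have hz : t ⟨i.val, hi⟩ = 0 := by
    apply zero_of_coprime (hprim ⟨i.val, hi⟩)
    · linear_combination h2.1 - h1.1 - ea
    · linear_combination h2.2 - h1.2 - eb
  exact hz


lemma a_mem_Pmod {m : ℕ} (a b : Fin m → ℤ) (i : Fin m) : a ∈ Pmod m a b i :=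
  ⟨1, 0, by ring, by ring⟩

lemma b_mem_Pmod {m : ℕ} (a b : Fin m → ℤ) (i : Fin m) : b ∈ Pmod m a b i :=
  ⟨0, 1, by ring, by ring⟩

lemma phi_mem_Pmod {m : ℕ} (a b : Fin m → ℤ) (t : Fin m → ℤ)
    (ht : t ∈ Kmod m a b) (i : Fin m) : phi m a b t ∈ Pmod m a b i := by
  obtain ⟨hta, htb⟩ := ht
  rcases Nat.lt_or_ge (i.val + 1) m with h1 | h1
  · have hs : (fsucc i).val = i.val + 1 := fsucc_val h1
    refine ⟨-((∑ j ∈ F m i.val, t j * b j) + t i * b i),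
           (∑ j ∈ F m i.val, t j * a j) + t i * a i, ?_, ?_⟩
    · rw [phi_apply]; ring
    · rw [phi_apply, hs]
      have ea : (∑ j ∈ F m (i.val + 1), t j * a j)
          = (∑ j ∈ F m i.val, t j * a j) + t ⟨i.val, i.isLt⟩ * a ⟨i.val, i.isLt⟩ :=
        sum_F_succ i.isLt _
      have eb : (∑ j ∈ F m (i.val + 1), t j * b j)
          = (∑ j ∈ F m i.val, t j * b j) + t ⟨i.val, i.isLt⟩ * b ⟨i.val, i.isLt⟩ :=
        sum_F_succ i.isLt _
      linear_combination b (fsucc i) * ea - a (fsucc i) * eb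
  · have him := i.isLt
    have hiv : i.val = m - 1 := by omega
    have ea : (∑ j ∈ F m (i.val + 1), t j * a j)
        = (∑ j ∈ F m i.val, t j * a j) + t ⟨i.val, i.isLt⟩ * a ⟨i.val, i.isLt⟩ :=
      sum_F_succ i.isLt _
    have eb : (∑ j ∈ F m (i.val + 1), t j * b j)
        = (∑ j ∈ F m i.val, t j * b j) + t ⟨i.val, i.isLt⟩ * b ⟨i.val, i.isLt⟩ :=
      sum_F_succ i.isLt _
    have efa : (∑ j ∈ F m (i.val + 1), t j * a j) = ∑ j, t j * a j := sum_F_univ (by omega) _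
    have efb : (∑ j ∈ F m (i.val + 1), t j * b j) = ∑ j, t j * b j := sum_F_univ (by omega) _
    have hSa : (∑ j ∈ F m i.val, t j * a j) = -(t ⟨i.val, i.isLt⟩ * a ⟨i.val, i.isLt⟩) := by
      linear_combination -ea + efa + hta
    have hSb : (∑ j ∈ F m i.val, t j * b j) = -(t ⟨i.val, i.isLt⟩ * b ⟨i.val, i.isLt⟩) := by
      linear_combination -eb + efb + htb
    refine ⟨0, 0, ?_, ?_⟩
    · rw [phi_apply]
      have hia : a ⟨i.val, i.isLt⟩ = a i := by congr
      have hib : b ⟨i.val, i.isLt⟩ = b i := by congr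
      linear_combination b i * hSa - a i * hSb - (t ⟨i.val, i.isLt⟩ * b i) * hia
        + (t ⟨i.val, i.isLt⟩ * a i) * hib
    · rw [phi_apply]
      have h0 : (fsucc i).val = 0 := by
        show (i.val + 1) % m = 0
        rw [hiv, Nat.sub_add_cancel (by omega), Nat.mod_self]
      rw [h0]
      have z1 : (∑ j ∈ F m 0, t j * a j) = 0 := sum_F_zero _
      have z2 : (∑ j ∈ F m 0, t j * b j) = 0 := sum_F_zero _
      linear_combination b (fsucc i) * z1 - a (fsucc i) * z2



lemma exists_phi {m : ℕ} (hm : 3 ≤ m) (a b : Fin m → ℤ)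
    (hprim : ∀ i, Int.gcd (a i) (b i) = 1)
    (hdet : ∀ i : Fin m, a i * b (fsucc i) - a (fsucc i) * b i ≠ 0)
    (y : Fin m → ℤ) (hy : ∀ i, y ∈ Pmod m a b i)
    (hy0 : y ⟨0, by omega⟩ = 0) (hyl : y ⟨m - 1, by omega⟩ = 0) :
    ∃ t ∈ Kmod m a b, y = phi m a b t := by
  have hy' : ∀ i : Fin m, ∃ α β : ℤ,
      y i = α * a i + β * b i ∧ y (fsucc i) = α * a (fsucc i) + β * b (fsucc i) := hy
  choose α β hA hB using hy'
  obtain ⟨pa, pb, hpa0, hpb0, hpas, hpbs⟩ : ∃ pa pb : ℕ → ℤ, pa 0 = 0 ∧ pb 0 = 0 ∧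
      (∀ n (hn : n < m), pa (n + 1) = α ⟨n, hn⟩) ∧
      (∀ n (hn : n < m), pb (n + 1) = β ⟨n, hn⟩) := by
    refine ⟨fun n => if h : 0 < n ∧ n - 1 < m then α ⟨n - 1, h.2⟩ else 0,
            fun n => if h : 0 < n ∧ n - 1 < m then β ⟨n - 1, h.2⟩ else 0,
            dif_neg (by omega), dif_neg (by omega), ?_, ?_⟩
    · intro n hn; exact dif_pos ⟨by omega, by omega⟩
    · intro n hn; exact dif_pos ⟨by omega, by omega⟩
  have hrel : ∀ i : Fin m, (α i - pa i.val) * a i + (β i - pb i.val) * b i = 0 := by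
    intro i
    rcases i with ⟨n, hn⟩
    cases n with
    | zero =>
      have h1 := hA ⟨0, hn⟩
      linear_combination hy0 - h1 - a ⟨0, hn⟩ * hpa0 - b ⟨0, hn⟩ * hpb0
    | succ k =>
      have hkm : k < m := by omega
      have hs : fsucc (⟨k, hkm⟩ : Fin m) = ⟨k + 1, hn⟩ := Fin.ext (fsucc_val hn)
      have h2 := hB ⟨k, hkm⟩
      rw [hs] at h2
      have e1 := hpas k hkm
      have e2 := hpbs k hkm
      linear_combination h2 - hA ⟨k + 1, hn⟩ - a ⟨k + 1, hn⟩ * e1 - b ⟨k + 1, hn⟩ * e2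
  choose t hta htb using fun i => exists_rep (hprim i) (hrel i)
  have inv : ∀ n, n ≤ m →
      (∑ j ∈ F m n, t j * a j) = pb n ∧ (∑ j ∈ F m n, t j * b j) = -pa n := by
    intro n
    induction n with
    | zero =>
      intro _
      constructor
      · rw [hpb0]; exact sum_F_zero _
      · rw [hpa0, neg_zero]; exact sum_F_zero _
    | succ k ih =>
      intro hk1
      have hkm : k < m := by omega
      obtain ⟨ia, ib⟩ := ih (by omega)
      have ea : (∑ j ∈ F m (k + 1), t j * a j)
          = (∑ j ∈ F m k, t j * a j) + t ⟨k, hkm⟩ * a ⟨k, hkm⟩ := sum_F_succ hkm _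
      have eb : (∑ j ∈ F m (k + 1), t j * b j)
          = (∑ j ∈ F m k, t j * b j) + t ⟨k, hkm⟩ * b ⟨k, hkm⟩ := sum_F_succ hkm _
      constructor
      · rw [hpbs k hkm]
        linear_combination ea + ia + hta ⟨k, hkm⟩
      · rw [hpas k hkm]
        linear_combination eb + ib + htb ⟨k, hkm⟩
  have hlast : m - 1 < m := by omega
  have hfl : fsucc (⟨m - 1, hlast⟩ : Fin m) = ⟨0, by omega⟩ := fsucc_last (by omega)
  have e1 : α ⟨m - 1, hlast⟩ * a ⟨m - 1, hlast⟩ + β ⟨m - 1, hlast⟩ * b ⟨m - 1, hlast⟩ = 0 := by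
    linear_combination hyl - hA ⟨m - 1, hlast⟩
  have h2 := hB ⟨m - 1, hlast⟩
  rw [hfl] at h2
  have e2 : α ⟨m - 1, hlast⟩ * a ⟨0, by omega⟩ + β ⟨m - 1, hlast⟩ * b ⟨0, by omega⟩ = 0 := by
    linear_combination hy0 - h2
  have hD := hdet ⟨m - 1, hlast⟩
  rw [hfl] at hD
  have hα : α ⟨m - 1, hlast⟩ = 0 := by
    have hz : α ⟨m - 1, hlast⟩ *
        (a ⟨m - 1, hlast⟩ * b ⟨0, by omega⟩ - a ⟨0, by omega⟩ * b ⟨m - 1, hlast⟩) = 0 := by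
      linear_combination b ⟨0, by omega⟩ * e1 - b ⟨m - 1, hlast⟩ * e2
    rcases mul_eq_zero.mp hz with h | h
    · exact h
    · exact absurd h hD
  have hβ : β ⟨m - 1, hlast⟩ = 0 := by
    have hz : β ⟨m - 1, hlast⟩ *
        (a ⟨m - 1, hlast⟩ * b ⟨0, by omega⟩ - a ⟨0, by omega⟩ * b ⟨m - 1, hlast⟩) = 0 := by
      linear_combination a ⟨m - 1, hlast⟩ * e2 - a ⟨0, by omega⟩ * e1
    rcases mul_eq_zero.mp hz with h | h
    · exact h
    · exact absurd h hD
  have hmm1 : m - 1 + 1 = m := by omega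
  have epa : pa m = α ⟨m - 1, hlast⟩ := by have := hpas (m - 1) hlast; rwa [hmm1] at this
  have epb : pb m = β ⟨m - 1, hlast⟩ := by have := hpbs (m - 1) hlast; rwa [hmm1] at this
  obtain ⟨iva, ivb⟩ := inv m le_rfl
  have efa : (∑ j ∈ F m m, t j * a j) = ∑ j, t j * a j := sum_F_univ le_rfl _
  have efb : (∑ j ∈ F m m, t j * b j) = ∑ j, t j * b j := sum_F_univ le_rfl _
  have hKa : (∑ j, t j * a j) = 0 := by linear_combination -efa + iva + epb + hβ
  have hKb : (∑ j, t j * b j) = 0 := by linear_combination -efb + ivb - epa - hα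
  refine ⟨t, ⟨hKa, hKb⟩, ?_⟩
  funext i
  rcases i with ⟨n, hn⟩
  rw [phi_apply]
  cases n with
  | zero =>
    have z1 : (∑ j ∈ F m 0, t j * a j) = 0 := sum_F_zero _
    have z2 : (∑ j ∈ F m 0, t j * b j) = 0 := sum_F_zero _
    linear_combination hy0 - b ⟨0, hn⟩ * z1 + a ⟨0, hn⟩ * z2
  | succ k =>
    have hkm : k < m := by omega
    have hs : fsucc (⟨k, hkm⟩ : Fin m) = ⟨k + 1, hn⟩ := Fin.ext (fsucc_val hn)
    have h2 := hB ⟨k, hkm⟩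
    rw [hs] at h2
    obtain ⟨iva, ivb⟩ := inv (k + 1) (by omega)
    have e1 := hpas k hkm
    have e2 := hpbs k hkm
    linear_combination h2 - b ⟨k + 1, hn⟩ * iva - b ⟨k + 1, hn⟩ * e2
      + a ⟨k + 1, hn⟩ * ivb - a ⟨k + 1, hn⟩ * e1



lemma decomp {m : ℕ} (hm : 3 ≤ m) (a b : Fin m → ℤ)
    (hprim : ∀ i, Int.gcd (a i) (b i) = 1)
    (hdet : ∀ i : Fin m, a i * b (fsucc i) - a (fsucc i) * b i ≠ 0)
    (x : Fin m → ℤ) (hx : ∀ i, x ∈ Pmod m a b i) :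
    ∃ A B : ℤ, ∃ t ∈ Kmod m a b, x = A • a + B • b + phi m a b t := by
  have hlast : m - 1 < m := by omega
  obtain ⟨A, B, h1, h2⟩ := hx ⟨m - 1, hlast⟩
  rw [fsucc_last (by omega)] at h2
  have hyP : ∀ i, (x - A • a - B • b) ∈ Pmod m a b i := fun i =>
    Submodule.sub_mem _ (Submodule.sub_mem _ (hx i)
      (Submodule.smul_mem _ _ (a_mem_Pmod a b i)))
      (Submodule.smul_mem _ _ (b_mem_Pmod a b i))
  have hy0 : (x - A • a - B • b) ⟨0, by omega⟩ = 0 := by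
    simp only [Pi.sub_apply, Pi.smul_apply, smul_eq_mul]
    linear_combination h2
  have hyl : (x - A • a - B • b) ⟨m - 1, by omega⟩ = 0 := by
    simp only [Pi.sub_apply, Pi.smul_apply, smul_eq_mul]
    linear_combination h1
  obtain ⟨t, htK, hphi⟩ := exists_phi hm a b hprim hdet _ hyP hy0 hyl
  refine ⟨A, B, t, htK, ?_⟩
  rw [← hphi]
  abel

/-- `L_1 ∩ ⋯ ∩ L_m = ℤ⟨a⟩ + ℤ⟨b⟩ + φ(K)`, and the sum is direct:
every element of the intersection is uniquely `α • a + β • b + φ(t)` with `t ∈ K`. -/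
theorem stmt0 (m : ℕ) (hm : 3 ≤ m) (a b : Fin m → ℤ)
    (hprim : ∀ i, Int.gcd (a i) (b i) = 1)
    (hdet : ∀ i : Fin m, a i * b (fsucc i) - a (fsucc i) * b i ≠ 0) :
    (⨅ i, Lmod m a b i) =
      Submodule.span ℤ {a} ⊔ Submodule.span ℤ {b} ⊔ (Kmod m a b).map (phi m a b) ∧
    ∀ x ∈ ⨅ i, Lmod m a b i,
      ∃! p : ℤ × ℤ × (Kmod m a b),
        x = p.1 • a + p.2.1 • b + phi m a b (p.2.2 : Fin m → ℤ) := by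
  have hL : (⨅ i, Lmod m a b i) = ⨅ i, Pmod m a b i :=
    iInf_congr (Lmod_eq_Pmod (by omega) a b)
  constructor
  · apply le_antisymm
    · intro x hx
      rw [hL, Submodule.mem_iInf _] at hx
      obtain ⟨A, B, t, htK, rfl⟩ := decomp hm a b hprim hdet x hx
      refine Submodule.add_mem _ (Submodule.add_mem _ ?_ ?_) ?_
      · exact Submodule.mem_sup_left (Submodule.mem_sup_left
          (Submodule.smul_mem _ _ (Submodule.mem_span_singleton_self a)))
      · exact Submodule.mem_sup_left (Submodule.mem_sup_right
          (Submodule.smul_mem _ _ (Submodule.mem_span_singleton_self b)))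
      · exact Submodule.mem_sup_right (Submodule.mem_map.mpr ⟨t, htK, rfl⟩)
    · rw [hL]
      refine sup_le (sup_le ?_ ?_) ?_
      · exact Submodule.span_le.mpr (Set.singleton_subset_iff.mpr
          ((Submodule.mem_iInf _).mpr fun i => a_mem_Pmod a b i))
      · exact Submodule.span_le.mpr (Set.singleton_subset_iff.mpr
          ((Submodule.mem_iInf _).mpr fun i => b_mem_Pmod a b i))
      · intro z hz
        obtain ⟨t, htK, rfl⟩ := Submodule.mem_map.mp hz
        exact (Submodule.mem_iInf _).mpr fun i => phi_mem_Pmod a b t htK i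
  · intro x hx
    rw [hL, Submodule.mem_iInf _] at hx
    obtain ⟨A, B, t, htK, hEq⟩ := decomp hm a b hprim hdet x hx
    refine ⟨⟨A, B, ⟨t, htK⟩⟩, hEq, ?_⟩
    rintro ⟨A', B', t'⟩ h'
    have h12 : A' • a + B' • b + phi m a b (t' : Fin m → ℤ)
        = A • a + B • b + phi m a b t := h'.symm.trans hEq
    have hz : (A' - A) • a + (B' - B) • b + phi m a b ((t' : Fin m → ℤ) - t) = 0 := by
      have e1 : (A' - A) • a + (B' - B) • b + phi m a b ((t' : Fin m → ℤ) - t)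
          = (A' • a + B' • b + phi m a b (t' : Fin m → ℤ))
            - (A • a + B • b + phi m a b t) := by
        rw [map_sub, sub_smul, sub_smul]; abel
      rw [e1, h12, sub_self]
    obtain ⟨hA, hB, ht0⟩ := indep hm a b hprim hdet (A' - A) (B' - B) _
      (Submodule.sub_mem _ t'.2 htK) hz
    simp only [Prod.mk.injEq]
    exact ⟨by linarith [sub_eq_zero.mp hA],
           by linarith [sub_eq_zero.mp hB],
           Subtype.ext (sub_eq_zero.mp ht0)⟩


end ToricStmt
end

section
/- Let m ≥ 3 and let λ_1,…,λ_m ∈ ℤ² be such that each λ_i is primitive and det(λ_i,λ_{i+1}) ≠ 0 for i = 1,…,m (indices mod m). If α, β ∈ ℤ and t ∈ K satisfy α·a + β·b + φ(t) = 0 in ℤ^m, then α = 0, β = 0 and t = 0. -/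
namespace ToricStmt

/-- Partial sum helper: sum of `f j` over `j : Fin m` with `j.val < n`. -/
private def S (m : ℕ) (f : Fin m → ℤ) (n : ℕ) : ℤ :=
  ∑ j ∈ Finset.univ.filter (fun j : Fin m => (j : ℕ) < n), f j

private lemma S_zero (m : ℕ) (f : Fin m → ℤ) : S m f 0 = 0 := by
  simp [S]

private lemma S_succ (m : ℕ) (f : Fin m → ℤ) (n : ℕ) (h : n < m) :
    S m f (n + 1) = S m f n + f ⟨n, h⟩ := by
  unfold S
  have hset : Finset.univ.filter (fun j : Fin m => (j : ℕ) < n + 1)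
      = insert (⟨n, h⟩ : Fin m) (Finset.univ.filter (fun j : Fin m => (j : ℕ) < n)) := by
    ext j
    simp only [Finset.mem_filter, Finset.mem_univ, true_and, Finset.mem_insert, Fin.ext_iff]
    omega
  rw [hset, Finset.sum_insert (by simp)]
  ring

private lemma S_top (m : ℕ) (f : Fin m → ℤ) : S m f m = ∑ j, f j := by
  unfold S
  congr 1
  ext j
  simp [j.isLt]

private lemma exists_k (p q x y : ℤ) (hg : Int.gcd p q = 1) (h : q * x = p * y) :
    ∃ k : ℤ, x = k * p ∧ y = k * q := by
  obtain ⟨u, v, huv⟩ := Int.isCoprime_iff_gcd_eq_one.mpr hg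
  refine ⟨u * x + v * y, ?_, ?_⟩
  · linear_combination (-x) * huv + v * h
  · linear_combination (-y) * huv - u * h

private lemma k_zero_of_prim (p q c : ℤ) (hg : Int.gcd p q = 1)
    (h1 : c * p = 0) (h2 : c * q = 0) : c = 0 := by
  by_contra hne
  have hp : p = 0 := by rcases mul_eq_zero.mp h1 with h | h; exact absurd h hne; exact h
  have hq : q = 0 := by rcases mul_eq_zero.mp h2 with h | h; exact absurd h hne; exact h
  rw [hp, hq] at hg
  simp at hg

/-- If `α • a + β • b + φ(t) = 0` with `t ∈ K`, then `α = β = 0` and `t = 0`. -/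
theorem stmt4 (m : ℕ) (hm : 3 ≤ m) (a b : Fin m → ℤ)
    (hprim : ∀ i, Int.gcd (a i) (b i) = 1)
    (hdet : ∀ i : Fin m, a i * b (fsucc i) - a (fsucc i) * b i ≠ 0) :
    ∀ (α β : ℤ), ∀ t ∈ Kmod m a b,
      α • a + β • b + phi m a b t = 0 → α = 0 ∧ β = 0 ∧ t = 0 := by
  intro α β t ht heq
  obtain ⟨hta, htb⟩ := ht
  obtain ⟨p, rfl⟩ : ∃ p, m = p + 1 := ⟨m - 1, by omega⟩
  have hzero : 0 < p + 1 := by omega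
  -- componentwise equation
  have hi : ∀ i : Fin (p + 1),
      b i * (S (p + 1) (fun j => t j * a j) i.val + β) = a i * (S (p + 1) (fun j => t j * b j) i.val - α) := by
    intro i
    have h0 := congrFun heq i
    simp only [Pi.add_apply, Pi.smul_apply, smul_eq_mul, Pi.zero_apply, phi,
      LinearMap.coe_mk, AddHom.coe_mk] at h0
    have hsum : ∑ j ∈ Finset.univ.filter (fun j => j < i), (a j * b i - a i * b j) * t j
        = b i * S (p + 1) (fun j => t j * a j) i.val - a i * S (p + 1) (fun j => t j * b j) i.val := by
      unfold S
      simp only [Fin.lt_def]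
      rw [Finset.mul_sum, Finset.mul_sum, ← Finset.sum_sub_distrib]
      exact Finset.sum_congr rfl fun j _ => by ring
    rw [hsum] at h0
    linear_combination h0
  have hkex : ∀ i : Fin (p + 1), ∃ k : ℤ,
      S (p + 1) (fun j => t j * a j) i.val + β = k * a i ∧
      S (p + 1) (fun j => t j * b j) i.val - α = k * b i :=
    fun i => exists_k (a i) (b i) _ _ (hprim i) (hi i)
  choose k hka hkb using hkex
  -- base at index 0
  set i0 : Fin (p + 1) := ⟨0, hzero⟩ with hi0
  have hbase_a : β = k i0 * a i0 := by
    have := hka i0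
    rwa [S_zero, zero_add] at this
  have hbase_b : -α = k i0 * b i0 := by
    have := hkb i0
    rwa [S_zero, zero_sub] at this
  -- step
  have step : ∀ (n : ℕ) (h1 : n + 1 < p + 1),
      k ⟨n, by omega⟩ + t ⟨n, by omega⟩ = 0 ∧ k ⟨n + 1, h1⟩ = 0 := by
    intro n h1
    set i : Fin (p + 1) := ⟨n, by omega⟩ with hidef
    set i' : Fin (p + 1) := ⟨n + 1, h1⟩ with hi'def
    have hra : S (p + 1) (fun j => t j * a j) (n + 1)
        = S (p + 1) (fun j => t j * a j) n + t i * a i := S_succ (p + 1) _ n (by omega)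
    have hrb : S (p + 1) (fun j => t j * b j) (n + 1)
        = S (p + 1) (fun j => t j * b j) n + t i * b i := S_succ (p + 1) _ n (by omega)
    have e1 : (k i + t i) * a i = k i' * a i' := by
      have h2 := hka i'
      have h3 := hka i
      simp only [hi'def, hidef, Fin.val_mk] at h2 h3 ⊢
      linear_combination h2 - h3 - hra
    have e2 : (k i + t i) * b i = k i' * b i' := by
      have h2 := hkb i'
      have h3 := hkb i
      simp only [hi'def, hidef, Fin.val_mk] at h2 h3 ⊢
      linear_combination h2 - h3 - hrb
    have hfs : fsucc i = i' := by
      simp [fsucc, hidef, hi'def, Fin.ext_iff, Nat.mod_eq_of_lt h1]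
    have hd := hdet i
    rw [hfs] at hd
    have hcross : (k i + t i) * (a i * b i' - a i' * b i) = 0 := by
      linear_combination b i' * e1 - a i' * e2
    have hc0 : k i + t i = 0 := by
      rcases mul_eq_zero.mp hcross with h | h
      · exact h
      · exact absurd h hd
    have hk' : k i' = 0 := by
      refine k_zero_of_prim (a i') (b i') (k i') (hprim i') ?_ ?_
      · linear_combination -e1 + a i * hc0
      · linear_combination -e2 + b i * hc0
    exact ⟨hc0, hk'⟩
  -- wrap-around at the last index
  set last : Fin (p + 1) := ⟨p, by omega⟩ with hlast
  have hSAm : S (p + 1) (fun j => t j * a j) (p + 1) = 0 := by rw [S_top]; exact hta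
  have hSBm : S (p + 1) (fun j => t j * b j) (p + 1) = 0 := by rw [S_top]; exact htb
  have hra : S (p + 1) (fun j => t j * a j) p + t last * a last = 0 := by
    have := S_succ (p + 1) (fun j => t j * a j) p (by omega)
    rw [hSAm] at this
    linear_combination -this
  have hrb : S (p + 1) (fun j => t j * b j) p + t last * b last = 0 := by
    have := S_succ (p + 1) (fun j => t j * b j) p (by omega)
    rw [hSBm] at this
    linear_combination -this
  have e1 : (k last + t last) * a last = k i0 * a i0 := by
    have h2 := hka last
    have h4 := hra
    simp only [hlast, Fin.val_mk] at h2 h4 ⊢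
    linear_combination -h2 + h4 + hbase_a
  have e2 : (k last + t last) * b last = k i0 * b i0 := by
    have h2 := hkb last
    have h4 := hrb
    simp only [hlast, Fin.val_mk] at h2 h4 ⊢
    linear_combination -h2 + h4 + hbase_b
  have hfs : fsucc last = i0 := by
    simp [fsucc, hlast, hi0, Fin.ext_iff]
  have hd := hdet last
  rw [hfs] at hd
  have hcross : k i0 * (a last * b i0 - a i0 * b last) = 0 := by
    linear_combination b last * e1 - a last * e2
  have hk0 : k i0 = 0 := by
    rcases mul_eq_zero.mp hcross with h | h
    · exact h
    · exact absurd h hd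
  have hβ : β = 0 := by rw [hbase_a, hk0]; ring
  have hα : α = 0 := by
    have := hbase_b
    rw [hk0] at this
    linarith
  have hclast : k last + t last = 0 := by
    refine k_zero_of_prim (a last) (b last) _ (hprim last) ?_ ?_
    · rw [e1, hk0]; ring
    · rw [e2, hk0]; ring
  -- all k vanish
  have hkall : ∀ (n : ℕ) (hn : n < p + 1), k ⟨n, hn⟩ = 0 := by
    intro n
    induction n with
    | zero => intro hn; exact hk0
    | succ q ih => intro hn; exact (step q hn).2
  refine ⟨hα, hβ, ?_⟩
  funext i
  show t i = 0
  by_cases h1 : i.val + 1 < p + 1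
  · have hs := (step i.val h1).1
    have hki : k ⟨i.val, by omega⟩ = 0 := hkall i.val i.isLt
    have hieq : (⟨i.val, by omega⟩ : Fin (p + 1)) = i := Fin.ext rfl
    rw [hieq] at hs hki
    linarith
  · have hieq : i = last := by
      apply Fin.ext
      have := i.isLt
      simp only [hlast]
      omega
    have hki : k last = 0 := by
      have := hkall p (by omega)
      simpa [hlast] using this
    rw [hieq]
    linarith [hclast, hki]

end ToricStmt
end

section
/- Let m ≥ 3 and let λ_1,…,λ_m ∈ ℤ² satisfy det(λ_i,λ_{i+1}) ≠ 0 for i = 1,…,m−1 and λ_m ≠ (0,0). Then the restriction of φ to K is injective: if t, t' ∈ K and φ(t) = φ(t'), then t = t'. -/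
namespace ToricStmt

/-- If `det(λ_i, λ_{i+1}) ≠ 0` for `i = 1, …, m-1` (no wrap-around) and
`λ_m ≠ (0,0)`, then `φ` is injective on `K`. -/
theorem stmt6 (m : ℕ) (hm : 3 ≤ m) (a b : Fin m → ℤ)
    (hdet : ∀ i : Fin m, (i : ℕ) + 1 < m → a i * b (fsucc i) - a (fsucc i) * b i ≠ 0)
    (hlast : ¬(a ⟨m - 1, by omega⟩ = 0 ∧ b ⟨m - 1, by omega⟩ = 0)) :
    ∀ t ∈ Kmod m a b, ∀ t' ∈ Kmod m a b, phi m a b t = phi m a b t' → t = t' := by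
  intro t ht t' ht' hphi
  have hsK : t - t' ∈ Kmod m a b := Submodule.sub_mem _ ht ht'
  have hphis : phi m a b (t - t') = 0 := by rw [map_sub, hphi, sub_self]
  set s := t - t' with hs_def
  suffices h : s = 0 by
    have := sub_eq_zero.mp h
    exact this
  obtain ⟨hKa, hKb⟩ := hsK
  have key : ∀ n : ℕ, ∀ hn : n + 1 < m, s ⟨n, by omega⟩ = 0 := by
    intro n
    induction n using Nat.strong_induction_on with
    | _ n ih =>
      intro hn
      have h0 : phi m a b s ⟨n+1, hn⟩ = 0 := by rw [hphis]; rfl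
      simp only [phi, LinearMap.coe_mk, AddHom.coe_mk] at h0
      rw [Finset.sum_eq_single (⟨n, by omega⟩ : Fin m)] at h0
      · have hd := hdet ⟨n, by omega⟩ (by simpa using hn)
        have hfs : fsucc (⟨n, by omega⟩ : Fin m) = ⟨n+1, hn⟩ := by
          simp [fsucc, Nat.mod_eq_of_lt hn]
        rw [hfs] at hd
        exact (mul_eq_zero.mp h0).resolve_left hd
      · intro j hj hjne
        simp only [Finset.mem_filter, Finset.mem_univ, true_and] at hj
        have hjlt : (j : ℕ) < n + 1 := hj
        have hjn : (j : ℕ) ≠ n := fun h => hjne (Fin.ext h)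
        have hz := ih j.val (by omega) (by omega)
        have : s j = 0 := by
          have : (⟨(j:ℕ), by omega⟩ : Fin m) = j := Fin.ext rfl
          rwa [this] at hz
        rw [this, mul_zero]
      · intro hnot
        exfalso
        apply hnot
        simp only [Finset.mem_filter, Finset.mem_univ, true_and]
        exact Nat.lt_succ_self n
  have hlastz : s ⟨m - 1, by omega⟩ = 0 := by
    have hother : ∀ c : Fin m → ℤ, ∀ j : Fin m, j ∈ Finset.univ → j ≠ ⟨m - 1, by omega⟩ →
        s j * c j = 0 := by
      intro c j _ hjne
      have hjn : (j : ℕ) ≠ m - 1 := fun h => hjne (Fin.ext h)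
      have hz := key j.val (by omega)
      have heq : (⟨(j:ℕ), by omega⟩ : Fin m) = j := Fin.ext rfl
      rw [heq] at hz
      rw [hz, zero_mul]
    have ha : s ⟨m - 1, by omega⟩ * a ⟨m - 1, by omega⟩ = 0 :=
      (Finset.sum_eq_single _ (hother a) (fun h => absurd (Finset.mem_univ _) h)).symm.trans hKa
    have hb : s ⟨m - 1, by omega⟩ * b ⟨m - 1, by omega⟩ = 0 :=
      (Finset.sum_eq_single _ (hother b) (fun h => absurd (Finset.mem_univ _) h)).symm.trans hKb
    by_contra hne
    exact hlast ⟨(mul_eq_zero.mp ha).resolve_left hne,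
      (mul_eq_zero.mp hb).resolve_left hne⟩
  funext i
  show s i = 0
  by_cases hi : (i : ℕ) + 1 < m
  · have hz := key i.val hi
    have heq : (⟨(i:ℕ), by omega⟩ : Fin m) = i := Fin.ext rfl
    rwa [heq] at hz
  · have : (i : ℕ) = m - 1 := by omega
    have heq : i = ⟨m - 1, by omega⟩ := Fin.ext this
    rw [heq]
    exact hlastz

end ToricStmt
end
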